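/- arXiv:1804.00289 — 5 statements merged into one kernel-verified Lean document; each statement's English description precedes it below -/
import Mathlib

section
/- Let H be a finite-dimensional Hopf algebra over a field K of characteristic zero and let α and α' be Hopf 2-cocycles on H. Then the cocycle deformations ^αH and ^{α'}H are isomorphic as H-comodule algebras if and only if there exists a convolution-invertible linear functional ν ∈ H* such that ν(x₁)ν(y₁)α'(x₂,y₂)ν^{-1}(x₃y₃) = α(x,y) for all x, y ∈ H; moreover every H-comodule algebra isomorphism ^αH → ^{α'}H is of the form x ↦ ν(x₁)x₂ for such a ν. -/
open TensorProduct LinearMap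

universe u

section HopfDefs

variable (K : Type u) [Field K]

/-- Convolution product of two linear maps from a coalgebra `C` to an algebra `A`. -/
noncomputable def convH {C A : Type u} [AddCommGroup C] [Module K C] [Coalgebra K C]
    [Ring A] [Algebra K A] (f g : C →ₗ[K] A) : C →ₗ[K] A :=
  LinearMap.mul' K A ∘ₗ TensorProduct.map f g ∘ₗ Coalgebra.comul

variable (H : Type u) [Ring H] [HopfAlgebra K H]

/-- `x ⊗ y ↦ α(x₁ ⊗ y₁) • x₂ * y₂`, the multiplication of the cocycle deformation `^αH`. -/
noncomputable def aMul (α : H ⊗[K] H →ₗ[K] K) : H ⊗[K] H →ₗ[K] H :=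
  convH K (Algebra.linearMap K H ∘ₗ α) (LinearMap.mul' K H)

/-- `x ⊗ (y ⊗ z) ↦ α(x₁,y₁) α(x₂y₂, z)` -/
noncomputable def cocycleLHS (α : H ⊗[K] H →ₗ[K] K) : H ⊗[K] (H ⊗[K] H) →ₗ[K] K :=
  convH K
    (LinearMap.mul' K K ∘ₗ TensorProduct.map α Coalgebra.counit ∘ₗ
      (TensorProduct.assoc K H H H).symm.toLinearMap)
    (α ∘ₗ TensorProduct.map (LinearMap.mul' K H) LinearMap.id ∘ₗ
      (TensorProduct.assoc K H H H).symm.toLinearMap)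

/-- `x ⊗ (y ⊗ z) ↦ α(y₁,z₁) α(x, y₂z₂)` -/
noncomputable def cocycleRHS (α : H ⊗[K] H →ₗ[K] K) : H ⊗[K] (H ⊗[K] H) →ₗ[K] K :=
  convH K
    (LinearMap.mul' K K ∘ₗ TensorProduct.map Coalgebra.counit α)
    (α ∘ₗ TensorProduct.map LinearMap.id (LinearMap.mul' K H))

/-- A Hopf 2-cocycle on `H`: convolution invertible, satisfying the associativity (cocycle)
condition and the unity condition. -/
structure IsHopfCocycle (α : H ⊗[K] H →ₗ[K] K) : Prop where
  conv_invertible : ∃ β : H ⊗[K] H →ₗ[K] K,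
    convH K α β = Coalgebra.counit ∧ convH K β α = Coalgebra.counit
  cocycle : cocycleLHS K H α = cocycleRHS K H α
  unit_left : ∀ x : H, α (1 ⊗ₜ[K] x) = Coalgebra.counit x
  unit_right : ∀ x : H, α (x ⊗ₜ[K] 1) = Coalgebra.counit x

/-- `γ(x) = α(x₁, S(x₂))`. -/
noncomputable def cocycleGamma (α : H ⊗[K] H →ₗ[K] K) : H →ₗ[K] K :=
  α ∘ₗ TensorProduct.map LinearMap.id (HopfAlgebra.antipode (R := K)) ∘ₗ Coalgebra.comul

/-- The twisted antipode `S̃(x) = γ'(x₂) • S(x₁)`, where `γ'` is the convolution inverse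
of `γ`. -/
noncomputable def tAntipode (γ' : H →ₗ[K] K) : H →ₗ[K] H :=
  convH K (HopfAlgebra.antipode (R := K)) (Algebra.linearMap K H ∘ₗ γ')

/-- `A_f : x ↦ f(x₂) • x₁`, the action of `f ∈ H*` on `^αH`. -/
noncomputable def Af (f : H →ₗ[K] K) : H →ₗ[K] H :=
  convH K LinearMap.id (Algebra.linearMap K H ∘ₗ f)

/-- The map `M : x ⊗ y ↦ (x ·_α y₁) ⊗ y₂`. -/
noncomputable def Mmap (α : H ⊗[K] H →ₗ[K] K) : H ⊗[K] H →ₗ[K] H ⊗[K] H :=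
  TensorProduct.map (aMul K H α) LinearMap.id ∘ₗ
    (TensorProduct.assoc K H H H).symm.toLinearMap ∘ₗ
      TensorProduct.map LinearMap.id Coalgebra.comul

/-- The map `T : x ⊗ h ↦ (x ·_α S̃(h₁)) ⊗ h₂`. -/
noncomputable def Tmap (α : H ⊗[K] H →ₗ[K] K) (γ' : H →ₗ[K] K) :
    H ⊗[K] H →ₗ[K] H ⊗[K] H :=
  TensorProduct.map (aMul K H α) LinearMap.id ∘ₗ
    (TensorProduct.assoc K H H H).symm.toLinearMap ∘ₗ
      TensorProduct.map LinearMap.id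
        (TensorProduct.map (tAntipode K H γ') LinearMap.id ∘ₗ Coalgebra.comul)

/-- `ν ↦ (x ↦ ν(x₁) • x₂)`. -/
noncomputable def nuMap (ν : H →ₗ[K] K) : H →ₗ[K] H :=
  convH K (Algebra.linearMap K H ∘ₗ ν) LinearMap.id

/-- `φ : H →ₗ[K] H` is an isomorphism of `H`-comodule algebras `^αH → ^{α'}H`. -/
noncomputable def IsDeformIso (α α' : H ⊗[K] H →ₗ[K] K) (φ : H →ₗ[K] H) : Prop :=
  Function.Bijective φ ∧ φ 1 = 1 ∧
    φ ∘ₗ aMul K H α = aMul K H α' ∘ₗ TensorProduct.map φ φ ∧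
    Coalgebra.comul ∘ₗ φ = TensorProduct.map φ LinearMap.id ∘ₗ (Coalgebra.comul (A := H))

end HopfDefs

/-!
A comodule endomorphism `φ` of `H` (`Δ ∘ φ = (φ ⊗ id) ∘ Δ`) is the right hit action
`x ↦ ν(x₁) x₂` of `ν = ε ∘ φ`, and the hit action is an anti-homomorphism from the convolution
algebra `H*` to `End H`. The multiplication of `^αH` is `m ∘ (· ↼ α)` on `H ⊗ H`, and `m` is a
coalgebra map, so `x ↦ ν(x₁) x₂` intertwines the two deformed products exactly when
`α * (ν ∘ m) = (ν ⊗ ν) * α'`; multiplying on the right by the convolution inverse `ν⁻¹ ∘ m` gives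
the gauge relation. Unitality of the cocycles forces `ν(1) = 1`.
-/

section RightHit
open Coalgebra
variable {R C D : Type*} [CommSemiring R] [AddCommMonoid C] [Module R C] [Coalgebra R C]
  [AddCommMonoid D] [Module R D] [Coalgebra R D]

/-- The right hit action `x ↼ a = a(x₁) x₂` of `C*` on `C`. -/
noncomputable def rightHit (a : C →ₗ[R] R) : C →ₗ[R] C :=
  (TensorProduct.lid R C).toLinearMap ∘ₗ LinearMap.rTensor C a ∘ₗ comul

lemma comul_comp_rightHit (a : C →ₗ[R] R) :
    comul ∘ₗ rightHit a = LinearMap.rTensor C (rightHit a) ∘ₗ comul := by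
  have lid_natural : comul ∘ₗ (TensorProduct.lid R C).toLinearMap ∘ₗ LinearMap.rTensor C a =
      (TensorProduct.lid R (C ⊗[R] C)).toLinearMap ∘ₗ LinearMap.rTensor (C ⊗[R] C) a ∘ₗ
        LinearMap.lTensor C comul := by
    ext; simp
  have lid_assoc : (TensorProduct.lid R (C ⊗[R] C)).toLinearMap ∘ₗ
      LinearMap.rTensor (C ⊗[R] C) a ∘ₗ (TensorProduct.assoc R C C C).toLinearMap =
        LinearMap.rTensor C ((TensorProduct.lid R C).toLinearMap ∘ₗ LinearMap.rTensor C a) := by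
    ext; simp [smul_tmul']
  calc comul ∘ₗ rightHit a
      = (TensorProduct.lid R (C ⊗[R] C)).toLinearMap ∘ₗ LinearMap.rTensor (C ⊗[R] C) a ∘ₗ
          LinearMap.lTensor C comul ∘ₗ comul := by
        simp only [rightHit, ← LinearMap.comp_assoc, lid_natural]
    _ = LinearMap.rTensor C (rightHit a) ∘ₗ comul := by
        rw [← coassoc]
        simp only [← LinearMap.comp_assoc, lid_assoc]
        simp only [rightHit, LinearMap.rTensor_comp, LinearMap.comp_assoc]

lemma counit_comp_rightHit (a : C →ₗ[R] R) : counit ∘ₗ rightHit a = a := by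
  have lid_rid : counit ∘ₗ (TensorProduct.lid R C).toLinearMap ∘ₗ LinearMap.rTensor C a =
      a ∘ₗ (TensorProduct.rid R C).toLinearMap ∘ₗ LinearMap.lTensor C counit := by
    ext; simp [mul_comm]
  calc counit ∘ₗ rightHit a
      = a ∘ₗ (TensorProduct.rid R C).toLinearMap ∘ₗ LinearMap.lTensor C counit ∘ₗ comul := by
        simp only [rightHit, ← LinearMap.comp_assoc, lid_rid]
    _ = a := by rw [lTensor_counit_comp_comul]; ext; simp

lemma rightHit_counit : rightHit (counit : C →ₗ[R] R) = LinearMap.id := by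
  ext; simp [rightHit, rTensor_counit_comul]

lemma eq_rightHit_of_comul_comp {f : C →ₗ[R] C}
    (hf : comul ∘ₗ f = LinearMap.rTensor C f ∘ₗ comul) : f = rightHit (counit ∘ₗ f) :=
  calc f = rightHit counit ∘ₗ f := by rw [rightHit_counit, LinearMap.id_comp]
    _ = rightHit (counit ∘ₗ f) := by
      simp only [rightHit, LinearMap.comp_assoc, hf, LinearMap.rTensor_comp]

lemma rightHit_comp_coalgHom (h : C →ₗc[R] D) (a : D →ₗ[R] R) :
    rightHit a ∘ₗ (h : C →ₗ[R] D) = h ∘ₗ rightHit (a ∘ₗ (h : C →ₗ[R] D)) := by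
  have lid_map : (TensorProduct.lid R D).toLinearMap ∘ₗ LinearMap.rTensor D a ∘ₗ
      TensorProduct.map (h : C →ₗ[R] D) (h : C →ₗ[R] D) =
      (h : C →ₗ[R] D) ∘ₗ (TensorProduct.lid R C).toLinearMap ∘ₗ
        LinearMap.rTensor C (a ∘ₗ (h : C →ₗ[R] D)) := by
    ext; simp
  simp only [rightHit, LinearMap.comp_assoc, ← CoalgHomClass.map_comp_comul h]
  simp only [← LinearMap.comp_assoc, lid_map]

lemma map_rightHit_rightHit (a : C →ₗ[R] R) (b : D →ₗ[R] R) :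
    TensorProduct.map (rightHit a) (rightHit b) =
      rightHit (LinearMap.mul' R R ∘ₗ TensorProduct.map a b) := by
  refine TensorProduct.ext' fun x y => ?_
  simp only [rightHit, LinearMap.comp_apply, TensorProduct.map_tmul, comul_tmul]
  rw [← (ℛ R x).eq, ← (ℛ R y).eq]
  simp [TensorProduct.sum_tmul, TensorProduct.tmul_sum, Finset.smul_sum, smul_tmul', smul_smul,
    mul_comm]

lemma rightHit_injective : Function.Injective (rightHit : (C →ₗ[R] R) → C →ₗ[R] C) :=
  fun a b hab => by rw [← counit_comp_rightHit a, hab, counit_comp_rightHit]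

lemma IsGroupLikeElem.rightHit_apply {g : C} (hg : IsGroupLikeElem R g) (a : C →ₗ[R] R) :
    rightHit a g = a g • g := by
  simp [rightHit, hg.comul_eq_tmul_self]

end RightHit

section Convolution
open Coalgebra
variable {K : Type u} [Field K] {C D A : Type u} [AddCommGroup C] [Module K C] [Coalgebra K C]
  [AddCommGroup D] [Module K D] [Coalgebra K D] [Ring A] [Algebra K A]

lemma convH_algebraLinearMap_comp (a : C →ₗ[K] K) (g : C →ₗ[K] A) :
    convH K (Algebra.linearMap K A ∘ₗ a) g = g ∘ₗ rightHit a := by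
  have : LinearMap.mul' K A ∘ₗ TensorProduct.map (Algebra.linearMap K A ∘ₗ a) g =
      g ∘ₗ (TensorProduct.lid K C).toLinearMap ∘ₗ LinearMap.rTensor C a := by
    ext; simp [Algebra.smul_def]
  rw [convH, rightHit, ← LinearMap.comp_assoc, this]
  simp only [LinearMap.comp_assoc]

lemma convH_eq_comp_rightHit (a f : C →ₗ[K] K) : convH K a f = f ∘ₗ rightHit a := by
  simpa using convH_algebraLinearMap_comp a f

lemma convH_assoc (f g h : C →ₗ[K] K) :
    convH K (convH K f g) h = convH K f (convH K g h) :=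
  congrArg WithConv.ofConv (mul_assoc (WithConv.toConv f) (WithConv.toConv g) (WithConv.toConv h))

lemma convH_counit (f : C →ₗ[K] K) : convH K f counit = f := by
  rw [convH_eq_comp_rightHit, counit_comp_rightHit]

lemma rightHit_comp_rightHit (a b : C →ₗ[K] K) :
    rightHit a ∘ₗ rightHit b = rightHit (convH K b a) := by
  have hcomul : comul ∘ₗ (rightHit a ∘ₗ rightHit b) =
      LinearMap.rTensor C (rightHit a ∘ₗ rightHit b) ∘ₗ comul := by
    rw [← LinearMap.comp_assoc, comul_comp_rightHit, LinearMap.comp_assoc, comul_comp_rightHit,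
      ← LinearMap.comp_assoc, LinearMap.rTensor_comp]
  rw [eq_rightHit_of_comul_comp hcomul, ← LinearMap.comp_assoc, counit_comp_rightHit,
    convH_eq_comp_rightHit]

lemma IsGroupLikeElem.convH_apply {g : C} (hg : IsGroupLikeElem K g) (a f : C →ₗ[K] K) :
    convH K a f g = a g * f g := by
  rw [convH_eq_comp_rightHit, LinearMap.comp_apply, hg.rightHit_apply, map_smul, smul_eq_mul]

lemma rightHit_bijective_iff {a : C →ₗ[K] K} :
    Function.Bijective (rightHit a) ↔ ∃ a', convH K a a' = counit ∧ convH K a' a = counit := by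
  constructor
  · intro hbij
    set e := LinearEquiv.ofBijective (rightHit a) hbij
    have hinv : rightHit a ∘ₗ e.symm.toLinearMap = LinearMap.id :=
      LinearMap.ext e.apply_symm_apply
    have hinv' : e.symm.toLinearMap ∘ₗ rightHit a = LinearMap.id :=
      LinearMap.ext e.symm_apply_apply
    have hcomul : comul ∘ₗ e.symm.toLinearMap =
        LinearMap.rTensor C e.symm.toLinearMap ∘ₗ comul :=
      calc comul ∘ₗ e.symm.toLinearMap
          = LinearMap.rTensor C (e.symm.toLinearMap ∘ₗ rightHit a) ∘ₗ comul ∘ₗ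
              e.symm.toLinearMap := by rw [hinv', LinearMap.rTensor_id, LinearMap.id_comp]
        _ = LinearMap.rTensor C e.symm.toLinearMap ∘ₗ comul := by
          rw [LinearMap.rTensor_comp, LinearMap.comp_assoc, ← LinearMap.comp_assoc _ comul,
            ← comul_comp_rightHit, LinearMap.comp_assoc, hinv, LinearMap.comp_id]
    refine ⟨counit ∘ₗ e.symm.toLinearMap, rightHit_injective ?_, rightHit_injective ?_⟩
    · rw [← rightHit_comp_rightHit, ← eq_rightHit_of_comul_comp hcomul, hinv', rightHit_counit]
    · rw [← rightHit_comp_rightHit, ← eq_rightHit_of_comul_comp hcomul, hinv, rightHit_counit]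
  · rintro ⟨a', h, h'⟩
    refine Function.bijective_iff_has_inverse.mpr ⟨rightHit a', fun x => ?_, fun x => ?_⟩
    · rw [← LinearMap.comp_apply, rightHit_comp_rightHit, h, rightHit_counit, LinearMap.id_apply]
    · rw [← LinearMap.comp_apply, rightHit_comp_rightHit, h', rightHit_counit, LinearMap.id_apply]

lemma convH_comp_coalgHom (f g : D →ₗ[K] A) (h : C →ₗc[K] D) :
    convH K (f ∘ₗ (h : C →ₗ[K] D)) (g ∘ₗ (h : C →ₗ[K] D)) = convH K f g ∘ₗ (h : C →ₗ[K] D) :=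
  (LinearMap.convMul_comp_coalgHom_distrib (WithConv.toConv f) (WithConv.toConv g) h).symm

end Convolution

section Gauge
open Coalgebra
variable {K : Type u} [Field K] {H : Type u} [Ring H] [Bialgebra K H]

lemma convH_comp_mul'_eq_iff {ν ν' : H →ₗ[K] K} (h₁ : convH K ν ν' = counit)
    (h₂ : convH K ν' ν = counit) {β γ : H ⊗[K] H →ₗ[K] K} :
    convH K γ (ν' ∘ₗ LinearMap.mul' K H) = β ↔ convH K β (ν ∘ₗ LinearMap.mul' K H) = γ := by
  have cancel : ∀ {a b : H →ₗ[K] K}, convH K a b = counit → ∀ δ : H ⊗[K] H →ₗ[K] K,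
      convH K (convH K δ (a ∘ₗ LinearMap.mul' K H)) (b ∘ₗ LinearMap.mul' K H) = δ := by
    intro a b h δ
    rw [convH_assoc, ← Bialgebra.toLinearMap_mulCoalgHom, convH_comp_coalgHom, h,
      CoalgHomClass.counit_comp, convH_counit]
  constructor
  · rintro rfl
    exact cancel h₂ γ
  · rintro rfl
    exact cancel h₁ β

end Gauge

section Deformation
open Coalgebra
variable {K : Type u} [Field K] {H : Type u} [Ring H] [HopfAlgebra K H]

lemma nuMap_eq_rightHit (ν : H →ₗ[K] K) : nuMap K H ν = rightHit ν := by
  rw [nuMap, convH_algebraLinearMap_comp, LinearMap.id_comp]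

lemma aMul_eq_mul'_comp_rightHit (α : H ⊗[K] H →ₗ[K] K) :
    aMul K H α = LinearMap.mul' K H ∘ₗ rightHit α :=
  convH_algebraLinearMap_comp α _

lemma aMul_injective : Function.Injective (aMul K H) := by
  intro α β h
  have counit_comp_aMul : ∀ γ, counit ∘ₗ aMul K H γ = γ := fun γ => by
    rw [aMul_eq_mul'_comp_rightHit, ← LinearMap.comp_assoc, ← Bialgebra.toLinearMap_mulCoalgHom,
      CoalgHomClass.counit_comp, counit_comp_rightHit]
  rw [← counit_comp_aMul α, h, counit_comp_aMul]

lemma nuMap_comp_aMul (ν : H →ₗ[K] K) (α : H ⊗[K] H →ₗ[K] K) :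
    nuMap K H ν ∘ₗ aMul K H α = aMul K H (convH K α (ν ∘ₗ LinearMap.mul' K H)) := by
  rw [nuMap_eq_rightHit, aMul_eq_mul'_comp_rightHit, aMul_eq_mul'_comp_rightHit,
    ← LinearMap.comp_assoc, ← Bialgebra.toLinearMap_mulCoalgHom, rightHit_comp_coalgHom,
    LinearMap.comp_assoc, rightHit_comp_rightHit]

lemma aMul_comp_map_nuMap (ν : H →ₗ[K] K) (α : H ⊗[K] H →ₗ[K] K) :
    aMul K H α ∘ₗ TensorProduct.map (nuMap K H ν) (nuMap K H ν) =
      aMul K H (convH K (LinearMap.mul' K K ∘ₗ TensorProduct.map ν ν) α) := by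
  rw [nuMap_eq_rightHit, aMul_eq_mul'_comp_rightHit, aMul_eq_mul'_comp_rightHit,
    map_rightHit_rightHit, LinearMap.comp_assoc, rightHit_comp_rightHit]

lemma nuMap_comp_aMul_eq_iff (ν : H →ₗ[K] K) (α α' : H ⊗[K] H →ₗ[K] K) :
    nuMap K H ν ∘ₗ aMul K H α = aMul K H α' ∘ₗ TensorProduct.map (nuMap K H ν) (nuMap K H ν) ↔
      convH K α (ν ∘ₗ LinearMap.mul' K H) =
        convH K (LinearMap.mul' K K ∘ₗ TensorProduct.map ν ν) α' := by
  rw [nuMap_comp_aMul, aMul_comp_map_nuMap, aMul_injective.eq_iff]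

lemma exists_gauge_of_isDeformIso {α α' : H ⊗[K] H →ₗ[K] K} {φ : H →ₗ[K] H}
    (hφ : IsDeformIso K H α α' φ) :
    ∃ ν ν' : H →ₗ[K] K,
      convH K ν ν' = counit ∧ convH K ν' ν = counit ∧
      convH K (convH K (LinearMap.mul' K K ∘ₗ TensorProduct.map ν ν) α')
        (ν' ∘ₗ LinearMap.mul' K H) = α ∧
      φ = nuMap K H ν := by
  obtain ⟨hbij, -, hmul, hcomul⟩ := hφ
  obtain ⟨ν, rfl⟩ : ∃ ν, φ = nuMap K H ν :=
    ⟨counit ∘ₗ φ, by rw [nuMap_eq_rightHit]; exact eq_rightHit_of_comul_comp hcomul⟩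
  rw [nuMap_eq_rightHit] at hbij
  obtain ⟨ν', h₁, h₂⟩ := rightHit_bijective_iff.mp hbij
  rw [nuMap_comp_aMul_eq_iff] at hmul
  exact ⟨ν, ν', h₁, h₂, (convH_comp_mul'_eq_iff h₁ h₂).mpr hmul, rfl⟩

lemma isDeformIso_nuMap {α α' : H ⊗[K] H →ₗ[K] K} (hα : α (1 ⊗ₜ 1) = 1)
    (hα' : α' (1 ⊗ₜ 1) = 1) {ν ν' : H →ₗ[K] K} (h₁ : convH K ν ν' = counit)
    (h₂ : convH K ν' ν = counit)
    (hgauge : convH K (convH K (LinearMap.mul' K K ∘ₗ TensorProduct.map ν ν) α')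
      (ν' ∘ₗ LinearMap.mul' K H) = α) :
    IsDeformIso K H α α' (nuMap K H ν) := by
  have hmul := (convH_comp_mul'_eq_iff h₁ h₂).mp hgauge
  have hν_one : ν 1 = 1 := by
    have hne : ν 1 ≠ 0 := by
      have := LinearMap.congr_fun h₁ 1
      rw [IsGroupLikeElem.one.convH_apply, Bialgebra.counit_one] at this
      exact left_ne_zero_of_mul_eq_one this
    have := LinearMap.congr_fun hmul 1
    rw [IsGroupLikeElem.one.convH_apply, IsGroupLikeElem.one.convH_apply,
      Algebra.TensorProduct.one_def] at this
    simp only [hα, hα', LinearMap.comp_apply, LinearMap.mul'_apply, TensorProduct.map_tmul,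
      one_mul, mul_one] at this
    exact mul_left_cancel₀ hne (by rw [mul_one, ← this])
  refine ⟨?_, ?_, (nuMap_comp_aMul_eq_iff ν α α').mpr hmul, ?_⟩
  · rw [nuMap_eq_rightHit]
    exact rightHit_bijective_iff.mpr ⟨ν', h₁, h₂⟩
  · rw [nuMap_eq_rightHit, IsGroupLikeElem.one.rightHit_apply, hν_one, one_smul]
  · rw [nuMap_eq_rightHit]
    exact comul_comp_rightHit ν

end Deformation

theorem cocycle_deformations_iso_iff_gauge_equivalent_general
    (K H : Type u) [Field K] [Ring H] [HopfAlgebra K H]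
    (α α' : H ⊗[K] H →ₗ[K] K)
    (hα : IsHopfCocycle K H α) (hα' : IsHopfCocycle K H α') :
    ((∃ φ : H →ₗ[K] H, IsDeformIso K H α α' φ) ↔
      (∃ ν ν' : H →ₗ[K] K,
        convH K ν ν' = Coalgebra.counit ∧ convH K ν' ν = Coalgebra.counit ∧
        convH K (convH K (LinearMap.mul' K K ∘ₗ TensorProduct.map ν ν) α')
          (ν' ∘ₗ LinearMap.mul' K H) = α)) ∧
    (∀ φ : H →ₗ[K] H, IsDeformIso K H α α' φ →
      ∃ ν ν' : H →ₗ[K] K,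
        convH K ν ν' = Coalgebra.counit ∧ convH K ν' ν = Coalgebra.counit ∧
        convH K (convH K (LinearMap.mul' K K ∘ₗ TensorProduct.map ν ν) α')
          (ν' ∘ₗ LinearMap.mul' K H) = α ∧
        φ = nuMap K H ν) := by
  have unit_one : ∀ {β}, IsHopfCocycle K H β → β (1 ⊗ₜ 1) = 1 := fun hβ => by
    rw [hβ.unit_left, Bialgebra.counit_one]
  refine ⟨⟨fun ⟨φ, hφ⟩ => ?_, fun ⟨ν, ν', h₁, h₂, hgauge⟩ => ?_⟩,
    fun φ => exists_gauge_of_isDeformIso⟩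
  · obtain ⟨ν, ν', h₁, h₂, hgauge, -⟩ := exists_gauge_of_isDeformIso hφ
    exact ⟨ν, ν', h₁, h₂, hgauge⟩
  · exact ⟨nuMap K H ν, isDeformIso_nuMap (unit_one hα) (unit_one hα') h₁ h₂ hgauge⟩

/-- `^αH ≅ ^{α'}H` as `H`-comodule algebras iff there is a convolution
invertible `ν ∈ H*` with `ν(x₁)ν(y₁)α'(x₂,y₂)ν⁻¹(x₃y₃) = α(x,y)`; moreover every such
isomorphism has the form `x ↦ ν(x₁) x₂`. -/
theorem cocycle_deformations_iso_iff_gauge_equivalent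
    (K H : Type u) [Field K] [CharZero K] [Ring H] [HopfAlgebra K H]
    [FiniteDimensional K H]
    (α α' : H ⊗[K] H →ₗ[K] K)
    (hα : IsHopfCocycle K H α) (hα' : IsHopfCocycle K H α') :
    ((∃ φ : H →ₗ[K] H, IsDeformIso K H α α' φ) ↔
      (∃ ν ν' : H →ₗ[K] K,
        convH K ν ν' = Coalgebra.counit ∧ convH K ν' ν = Coalgebra.counit ∧
        convH K (convH K (LinearMap.mul' K K ∘ₗ TensorProduct.map ν ν) α')
          (ν' ∘ₗ LinearMap.mul' K H) = α)) ∧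
    (∀ φ : H →ₗ[K] H, IsDeformIso K H α α' φ →
      ∃ ν ν' : H →ₗ[K] K,
        convH K ν ν' = Coalgebra.counit ∧ convH K ν' ν = Coalgebra.counit ∧
        convH K (convH K (LinearMap.mul' K K ∘ₗ TensorProduct.map ν ν) α')
          (ν' ∘ₗ LinearMap.mul' K H) = α ∧
        φ = nuMap K H ν) :=
  cocycle_deformations_iso_iff_gauge_equivalent_general K H α α' hα hα'
end

section
/- Let H be a finite-dimensional Hopf algebra over a field K of characteristic zero, and let α : H ⊗ H → K be a linear map satisfying the 2-cocycle condition α(x₁,y₁)α(x₂y₂,z) = α(y₁,z₁)α(x,y₂z₂) and the unity condition α(1,x) = α(x,1) = ε(x). Define γ ∈ H* by γ(x) = α(x₁, S(x₂)). Then α is invertible in the convolution algebra (H ⊗ H)* if and only if γ is invertible in the convolution algebra H*. -/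
open TensorProduct LinearMap

universe u

/-! Let `π : H ⊗ H → H`, `x ⊗ y ↦ ε(x) y`, and `β(x ⊗ y) = α(x y₁ ⊗ S y₂)`. Evaluating the cocycle
identity at `x ⊗ y₁ ⊗ S y₂` gives `γ ∘ π = α * β` in `(H ⊗ H)*`; on the right-hand side this uses
`(y₁ ⊗ S y₄) ⊗ y₂ S y₃ = (y₁ ⊗ S y₂) ⊗ 1` and `α(x, 1) = ε(x)`.

Since `π` is a coalgebra map, `f ↦ f ∘ π` is a ring map `H* → (H ⊗ H)*`, so a right inverse `γ'` of
`γ` yields the right inverse `β * (γ' ∘ π)` of `α`. Conversely, with `σ(y) = S y₁ ⊗ y₂` one has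
`(φ * (g ∘ π)) ∘ σ = (φ ∘ σ) * g` and `β ∘ σ = ε` (by `α(1, x) = ε(x)`), so if `α'` is a left inverse
of `α` then `(α' ∘ σ) * γ = (α' * α * β) ∘ σ = ε`. Both convolution algebras are finite-dimensional,
hence Artinian, so one-sided inverses are two-sided. -/

open WithConv Coalgebra HopfAlgebra

section Convolution

variable {K : Type u} [Field K] {C A : Type u} [AddCommGroup C] [Module K C] [Coalgebra K C]
  [Ring A] [Algebra K A]

lemma toConv_convH (f g : C →ₗ[K] A) : toConv (convH K f g) = toConv f * toConv g := rfl

lemma toConv_counit : toConv (counit : C →ₗ[K] K) = 1 := by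
  ext; simp

lemma exists_convH_inverse_iff_isUnit (f : C →ₗ[K] K) :
    (∃ g, convH K f g = counit ∧ convH K g f = counit) ↔ IsUnit (toConv f) := by
  rw [isUnit_iff_exists, toConv_surjective.exists]
  simp only [← toConv_convH, ← toConv_counit, toConv_injective.eq_iff]

instance [FiniteDimensional K C] : Module.Finite K (WithConv (C →ₗ[K] K)) :=
  .equiv (WithConv.linearEquiv K _).symm

instance [FiniteDimensional K C] : IsDedekindFiniteMonoid (WithConv (C →ₗ[K] K)) :=
  have := IsArtinianRing.of_finite K (WithConv (C →ₗ[K] K))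
  inferInstance

end Convolution

section CoalgHom

variable {R C D A : Type*} [CommSemiring R] [AddCommMonoid C] [Module R C] [Coalgebra R C]
  [AddCommMonoid D] [Module R D] [Coalgebra R D] [Semiring A] [Algebra R A]

noncomputable def CoalgHom.convPrecomp (φ : C →ₗc[R] D) :
    WithConv (D →ₗ[R] A) →+* WithConv (C →ₗ[R] A) where
  toFun f := toConv (f.ofConv ∘ₗ φ.toLinearMap)
  map_one' := by ext; simp [LinearMap.convOne_def]
  map_mul' f g := by rw [LinearMap.convMul_comp_coalgHom_distrib]
  map_zero' := rfl
  map_add' _ _ := rfl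

lemma CoalgHom.ofConv_convPrecomp (φ : C →ₗc[R] D) (f : WithConv (D →ₗ[R] A)) :
    (φ.convPrecomp f).ofConv = f.ofConv ∘ₗ φ.toLinearMap := rfl

variable (R C D) in
noncomputable def counitLeft : C ⊗[R] D →ₗc[R] D :=
  (Coalgebra.TensorProduct.lid R D).toCoalgHom.comp
    (Coalgebra.TensorProduct.map (counitCoalgHom R C) (CoalgHom.id R D))

@[simp] lemma counitLeft_tmul (c : C) (d : D) :
    counitLeft R C D (c ⊗ₜ d) = counit (R := R) c • d := by
  simp [counitLeft]

lemma lTensor_counitLeft_comp_comul :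
    lTensor (C ⊗[R] D) (counitLeft R C D).toLinearMap ∘ₗ comul =
      (TensorProduct.assoc R C D D).symm.toLinearMap ∘ₗ lTensor C comul := by
  refine TensorProduct.ext' fun c d => ?_
  have hc : ∑ i ∈ (ℛ R c).index, counit (R := R) ((ℛ R c).right i) • (ℛ R c).left i = c := by
    simpa only [map_sum, TensorProduct.rid_tmul, one_smul]
      using congr(TensorProduct.rid R C $(sum_tmul_counit_eq (ℛ R c)))
  conv_rhs => rw [← hc]
  simp only [LinearMap.comp_apply, TensorProduct.comul_tmul, lTensor_tmul, ← (ℛ R c).eq,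
    ← (ℛ R d).eq, sum_tmul, tmul_sum, map_sum, AlgebraTensorModule.tensorTensorTensorComm_tmul]
  simp only [CoalgHom.toLinearMap_eq_coe, coe_coe, counitLeft_tmul, tmul_smul, smul_tmul',
    LinearEquiv.coe_coe, assoc_symm_tmul]
  exact Finset.sum_comm

lemma convMul_convPrecomp_counitLeft_comp (f : D →ₗ[R] C) (β : C ⊗[R] D →ₗ[R] A)
    (g : D →ₗ[R] A) :
    (toConv β * (counitLeft R C D).convPrecomp (toConv g)).ofConv ∘ₗ rTensor D f ∘ₗ comul =
      (toConv (β ∘ₗ rTensor D f ∘ₗ comul) * toConv g).ofConv := by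
  have hsplit : map β (g ∘ₗ (counitLeft R C D).toLinearMap) =
      map β g ∘ₗ lTensor (C ⊗[R] D) (counitLeft R C D).toLinearMap := by
    rw [lTensor, ← map_comp, LinearMap.comp_id]
  simp only [LinearMap.convMul_def, CoalgHom.ofConv_convPrecomp, ofConv_toConv, hsplit,
    LinearMap.comp_assoc, lTensor_counitLeft_comp_comul]
  simp only [coassoc_simps]

lemma Coalgebra.Repr.sum_counit_mul {c : C} {ι : Type*} (𝓡 : Repr R c ι) (f : C →ₗ[R] R) :
    ∑ i ∈ 𝓡.index, counit (R := R) (𝓡.left i) * f (𝓡.right i) = f c := by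
  simpa using congr(f $(sum_counit_smul 𝓡))

end CoalgHom

section Hopf

variable {R H B : Type*} [CommSemiring R] [Semiring H] [HopfAlgebra R H] [Semiring B] [Algebra R B]

lemma AlgHom.toConv_mul_toConv_comp_antipode (φ : H →ₐ[R] B) :
    toConv φ.toLinearMap * toConv (φ.toLinearMap ∘ₗ antipode R) = 1 := by
  calc toConv φ.toLinearMap * toConv (φ.toLinearMap ∘ₗ antipode R)
      = toConv (φ.toLinearMap ∘ₗ (toConv LinearMap.id * toConv (antipode R (A := H))).ofConv) := by
        rw [LinearMap.algHom_comp_convMul_distrib]; rfl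
    _ = 1 := by rw [LinearMap.id_mul_antipode]; ext; simp

lemma AlgHom.toConv_comp_antipode_mul_toConv (φ : H →ₐ[R] B) :
    toConv (φ.toLinearMap ∘ₗ antipode R) * toConv φ.toLinearMap = 1 := by
  calc toConv (φ.toLinearMap ∘ₗ antipode R) * toConv φ.toLinearMap
      = toConv (φ.toLinearMap ∘ₗ (toConv (antipode R (A := H)) * toConv LinearMap.id).ofConv) := by
        rw [LinearMap.algHom_comp_convMul_distrib]; rfl
    _ = 1 := by rw [LinearMap.antipode_mul_id]; ext; simp

variable (R H)

noncomputable def comulAntipodeRight : H →ₗ[R] H ⊗[R] H := lTensor H (antipode R) ∘ₗ comul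

noncomputable def galoisMap : H ⊗[R] H →ₗ[R] H ⊗[R] H :=
  rTensor H (mul' R H) ∘ₗ (TensorProduct.assoc R H H H).symm.toLinearMap ∘ₗ lTensor H comul

lemma galoisMap_comp_rTensor_antipode_comul :
    galoisMap R H ∘ₗ rTensor H (antipode R) ∘ₗ comul = TensorProduct.mk R H H 1 := by
  simp only [galoisMap, coassoc_simps]
  rw [← LinearMap.rTensor_def, ← LinearMap.rTensor_def, HopfAlgebra.mul_antipode_rTensor_comul]
  ext y
  simp [LinearMap.rTensor_comp_apply]

open Algebra.TensorProduct

noncomputable def tensorIncl₁ : H →ₐ[R] (H ⊗[R] H) ⊗[R] H := includeLeft.comp includeLeft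

noncomputable def tensorIncl₂ : H →ₐ[R] (H ⊗[R] H) ⊗[R] H := includeLeft.comp includeRight

noncomputable def tensorIncl₃ : H →ₐ[R] (H ⊗[R] H) ⊗[R] H := includeRight

noncomputable def comulIncl₂₃ : H →ₐ[R] (H ⊗[R] H) ⊗[R] H :=
  (Algebra.TensorProduct.map includeRight (AlgHom.id R H)).comp (Bialgebra.comulAlgHom R H)

lemma toConv_comulIncl₂₃ : toConv (comulIncl₂₃ R H).toLinearMap =
    toConv (tensorIncl₂ R H).toLinearMap * toConv (tensorIncl₃ R H).toLinearMap := by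
  ext y
  rw [(ℛ R y).convMul_apply]
  simp [comulIncl₂₃, tensorIncl₂, tensorIncl₃, ← (ℛ R y).eq]

lemma lTensor_mul_comp_comul : lTensor (H ⊗[R] H) (mul' R H) ∘ₗ comul =
    mul' R ((H ⊗[R] H) ⊗[R] H) ∘ₗ
      map (toConv (tensorIncl₁ R H).toLinearMap * toConv (tensorIncl₃ R H).toLinearMap).ofConv
        (comulIncl₂₃ R H).toLinearMap := by
  refine TensorProduct.ext' fun a b => ?_
  simp [(ℛ R a).convMul_apply, tensorIncl₁, tensorIncl₃, comulIncl₂₃, ← (ℛ R a).eq, ← (ℛ R b).eq,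
    sum_tmul, tmul_sum]

/-- In Sweedler notation, `(y₁ ⊗ S y₄) ⊗ y₂ S y₃ = (y₁ ⊗ S y₂) ⊗ 1`. The left-hand side is
`U * (W ∘ S)` with `U = ι₁ * ι₃` and the algebra map `W = ι₂ * ι₃` (`ιᵢ = tensorInclᵢ`), whose
inverse is `W ∘ S`. -/
lemma lTensor_mul_comp_comul_comp_comulAntipodeRight :
    lTensor (H ⊗[R] H) (mul' R H) ∘ₗ comul ∘ₗ comulAntipodeRight R H =
      includeLeft.toLinearMap ∘ₗ comulAntipodeRight R H := by
  set U := toConv (tensorIncl₁ R H).toLinearMap * toConv (tensorIncl₃ R H).toLinearMap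
  have hU : U = toConv (tensorIncl₁ R H).toLinearMap *
      toConv ((tensorIncl₂ R H).toLinearMap ∘ₗ antipode R) * toConv (comulIncl₂₃ R H).toLinearMap := by
    rw [toConv_comulIncl₂₃, mul_assoc, ← mul_assoc (toConv (_ ∘ₗ antipode R)),
      AlgHom.toConv_comp_antipode_mul_toConv, one_mul]
  calc lTensor (H ⊗[R] H) (mul' R H) ∘ₗ comul ∘ₗ comulAntipodeRight R H
      = (U * toConv ((comulIncl₂₃ R H).toLinearMap ∘ₗ antipode R)).ofConv := by
        rw [comulAntipodeRight, ← LinearMap.comp_assoc, lTensor_mul_comp_comul,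
          LinearMap.convMul_def U]
        simp only [← map_comp_lTensor]
        rfl
    _ = (toConv (tensorIncl₁ R H).toLinearMap *
          toConv ((tensorIncl₂ R H).toLinearMap ∘ₗ antipode R)).ofConv := by
        rw [hU, mul_assoc, AlgHom.toConv_mul_toConv_comp_antipode, mul_one]
    _ = includeLeft.toLinearMap ∘ₗ comulAntipodeRight R H := by
        ext y
        simp [(ℛ R y).convMul_apply, comulAntipodeRight, tensorIncl₁, tensorIncl₂, ← (ℛ R y).eq]

end Hopf

section Cocycle

variable {K H : Type u} [Field K] [Ring H] [HopfAlgebra K H]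

noncomputable def cocycleBeta (α : H ⊗[K] H →ₗ[K] K) : H ⊗[K] H →ₗ[K] K :=
  α ∘ₗ lTensor H (antipode K) ∘ₗ galoisMap K H

lemma cocycleBeta_tmul (α : H ⊗[K] H →ₗ[K] K) (x y : H) :
    cocycleBeta α (x ⊗ₜ y) =
      ∑ i ∈ (ℛ K y).index, α ((x * (ℛ K y).left i) ⊗ₜ antipode K ((ℛ K y).right i)) := by
  simp [cocycleBeta, galoisMap, ← (ℛ K y).eq, tmul_sum]

lemma cocycleBeta_comp_rTensor_antipode_comul (α : H ⊗[K] H →ₗ[K] K)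
    (hunit_left : ∀ x : H, α (1 ⊗ₜ[K] x) = counit x) :
    cocycleBeta α ∘ₗ rTensor H (antipode K) ∘ₗ comul = counit := by
  rw [cocycleBeta, LinearMap.comp_assoc, LinearMap.comp_assoc,
    galoisMap_comp_rTensor_antipode_comul]
  ext y
  simp [hunit_left]

lemma cocycleLHS_tmul_tmul (α : H ⊗[K] H →ₗ[K] K) (x u v : H) :
    cocycleLHS K H α (x ⊗ₜ (u ⊗ₜ v)) = ∑ i ∈ (ℛ K x).index, ∑ j ∈ (ℛ K u).index,
      α ((ℛ K x).left i ⊗ₜ (ℛ K u).left j) * α (((ℛ K x).right i * (ℛ K u).right j) ⊗ₜ v) := by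
  rw [cocycleLHS, ← ofConv_toConv (convH K _ _), toConv_convH,
    ((ℛ K x).tmul ((ℛ K u).tmul (ℛ K v))).convMul_apply]
  simp only [Repr.tmul_index, Repr.tmul_left, Repr.tmul_right, coe_comp, LinearEquiv.coe_coe,
    Function.comp_apply, assoc_symm_tmul, map_tmul, mul'_apply, id_coe, id_eq, Finset.sum_product]
  refine Finset.sum_congr rfl fun i _ => Finset.sum_congr rfl fun j _ => ?_
  simpa [mul_assoc, ← Finset.mul_sum] using congr(α ((ℛ K x).left i ⊗ₜ (ℛ K u).left j) *
    $((ℛ K v).sum_counit_mul (α ∘ₗ TensorProduct.mk K H H ((ℛ K x).right i * (ℛ K u).right j))))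

lemma cocycleRHS_tmul_tmul (α : H ⊗[K] H →ₗ[K] K) (x u v : H) :
    cocycleRHS K H α (x ⊗ₜ (u ⊗ₜ v)) = ∑ j ∈ (ℛ K u).index, ∑ k ∈ (ℛ K v).index,
      α ((ℛ K u).left j ⊗ₜ (ℛ K v).left k) * α (x ⊗ₜ ((ℛ K u).right j * (ℛ K v).right k)) := by
  rw [cocycleRHS, ← ofConv_toConv (convH K _ _), toConv_convH,
    ((ℛ K x).tmul ((ℛ K u).tmul (ℛ K v))).convMul_apply]
  simp only [Repr.tmul_index, Repr.tmul_left, Repr.tmul_right, coe_comp, Function.comp_apply,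
    map_tmul, mul'_apply, id_coe, id_eq, Finset.sum_product]
  rw [Finset.sum_comm]
  refine Finset.sum_congr rfl fun j _ => ?_
  rw [Finset.sum_comm]
  refine Finset.sum_congr rfl fun k _ => ?_
  simpa [mul_assoc, mul_left_comm _ (α ((ℛ K u).left j ⊗ₜ (ℛ K v).left k)), ← Finset.mul_sum]
    using congr(α ((ℛ K u).left j ⊗ₜ (ℛ K v).left k) * $((ℛ K x).sum_counit_mul
      (α ∘ₗ (TensorProduct.mk K H H).flip ((ℛ K u).right j * (ℛ K v).right k))))

lemma cocycleLHS_comp_lTensor_comulAntipodeRight (α : H ⊗[K] H →ₗ[K] K) :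
    cocycleLHS K H α ∘ₗ lTensor H (comulAntipodeRight K H) =
      (toConv α * toConv (cocycleBeta α)).ofConv := by
  refine TensorProduct.ext' fun x y => ?_
  rw [((ℛ K x).tmul (ℛ K y)).convMul_apply]
  simp only [comulAntipodeRight, coe_comp, Function.comp_apply, lTensor_tmul, ← (ℛ K y).eq,
    map_sum, tmul_sum, cocycleLHS_tmul_tmul, Repr.tmul_index, Repr.tmul_left, Repr.tmul_right,
    cocycleBeta_tmul, Finset.sum_product]
  rw [Finset.sum_comm]
  refine Finset.sum_congr rfl fun i _ => ?_
  simpa [Finset.mul_sum] using congr(mul' K K (map (α ∘ₗ TensorProduct.mk K H H ((ℛ K x).left i))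
      (α ∘ₗ map (LinearMap.mulLeft K ((ℛ K x).right i)) (antipode K))
      $(sum_tmul_tmul_eq (ℛ K y) (fun j => ℛ K ((ℛ K y).left j))
        (fun j => ℛ K ((ℛ K y).right j)))))

lemma cocycleRHS_comp_mk (α : H ⊗[K] H →ₗ[K] K) (x : H) :
    cocycleRHS K H α ∘ₗ TensorProduct.mk K H (H ⊗[K] H) x =
      mul' K K ∘ₗ map α (α ∘ₗ TensorProduct.mk K H H x) ∘ₗ
        lTensor (H ⊗[K] H) (mul' K H) ∘ₗ comul := by
  refine TensorProduct.ext' fun u v => ?_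
  simp only [coe_comp, Function.comp_apply, mk_apply, cocycleRHS_tmul_tmul, comul_tmul,
    ← (ℛ K u).eq, ← (ℛ K v).eq, tmul_sum, sum_tmul, map_sum,
    AlgebraTensorModule.tensorTensorTensorComm_tmul, lTensor_tmul, mul'_apply, map_tmul]
  exact Finset.sum_comm

lemma cocycleRHS_comp_lTensor_comulAntipodeRight (α : H ⊗[K] H →ₗ[K] K)
    (hunit_right : ∀ x : H, α (x ⊗ₜ[K] 1) = counit x) :
    cocycleRHS K H α ∘ₗ lTensor H (comulAntipodeRight K H) =
      cocycleGamma K H α ∘ₗ (counitLeft K H H).toLinearMap := by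
  refine TensorProduct.ext' fun x y => ?_
  have hΘ := congr($(lTensor_mul_comp_comul_comp_comulAntipodeRight K H) y)
  have hx := congr($(cocycleRHS_comp_mk α x) (comulAntipodeRight K H y))
  simp only [LinearMap.comp_apply, TensorProduct.mk_apply] at hΘ hx
  rw [LinearMap.comp_apply, lTensor_tmul, hx, hΘ]
  simp [hunit_right, cocycleGamma, comulAntipodeRight, lTensor, mul_comm]

theorem convPrecomp_counitLeft_cocycleGamma (α : H ⊗[K] H →ₗ[K] K)
    (hcocycle : cocycleLHS K H α = cocycleRHS K H α)
    (hunit_right : ∀ x : H, α (x ⊗ₜ[K] 1) = counit x) :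
    (counitLeft K H H).convPrecomp (toConv (cocycleGamma K H α)) =
      toConv α * toConv (cocycleBeta α) := by
  refine WithConv.ext ?_
  rw [CoalgHom.ofConv_convPrecomp, ofConv_toConv,
    ← cocycleRHS_comp_lTensor_comulAntipodeRight α hunit_right, ← hcocycle,
    cocycleLHS_comp_lTensor_comulAntipodeRight]

end Cocycle

theorem cocycle_conv_invertible_iff_gamma_invertible_general
    (K H : Type u) [Field K] [Ring H] [HopfAlgebra K H]
    [FiniteDimensional K H]
    (α : H ⊗[K] H →ₗ[K] K)
    (hcocycle : cocycleLHS K H α = cocycleRHS K H α)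
    (hunit_left : ∀ x : H, α (1 ⊗ₜ[K] x) = Coalgebra.counit x)
    (hunit_right : ∀ x : H, α (x ⊗ₜ[K] 1) = Coalgebra.counit x) :
    (∃ β : H ⊗[K] H →ₗ[K] K,
        convH K α β = Coalgebra.counit ∧ convH K β α = Coalgebra.counit) ↔
    (∃ γ' : H →ₗ[K] K,
        convH K (cocycleGamma K H α) γ' = Coalgebra.counit ∧
        convH K γ' (cocycleGamma K H α) = Coalgebra.counit) := by
  rw [exists_convH_inverse_iff_isUnit, exists_convH_inverse_iff_isUnit]
  have key := convPrecomp_counitLeft_cocycleGamma α hcocycle hunit_right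
  constructor
  · intro hα
    obtain ⟨α', hα'⟩ := hα.exists_left_inv
    refine .of_mul_eq_one_right (toConv (α'.ofConv ∘ₗ rTensor H (antipode K) ∘ₗ comul)) ?_
    refine WithConv.ext ?_
    rw [← convMul_convPrecomp_counitLeft_comp, key, ← mul_assoc, hα', one_mul, ofConv_toConv,
      cocycleBeta_comp_rTensor_antipode_comul α hunit_left, ← toConv_counit]
  · intro hγ
    obtain ⟨γ', hγ'⟩ := hγ.exists_right_inv
    refine .of_mul_eq_one (toConv (cocycleBeta α) * (counitLeft K H H).convPrecomp γ') ?_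
    rw [← mul_assoc, ← key, ← map_mul, hγ', map_one]

/-- For `α` satisfying the 2-cocycle and unity conditions, `α` is
convolution invertible in `(H ⊗ H)*` iff `γ(x) = α(x₁, S(x₂))` is convolution invertible
in `H*`. -/
theorem cocycle_conv_invertible_iff_gamma_invertible
    (K H : Type u) [Field K] [CharZero K] [Ring H] [HopfAlgebra K H]
    [FiniteDimensional K H]
    (α : H ⊗[K] H →ₗ[K] K)
    (hcocycle : cocycleLHS K H α = cocycleRHS K H α)
    (hunit_left : ∀ x : H, α (1 ⊗ₜ[K] x) = Coalgebra.counit x)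
    (hunit_right : ∀ x : H, α (x ⊗ₜ[K] 1) = Coalgebra.counit x) :
    (∃ β : H ⊗[K] H →ₗ[K] K,
        convH K α β = Coalgebra.counit ∧ convH K β α = Coalgebra.counit) ↔
    (∃ γ' : H →ₗ[K] K,
        convH K (cocycleGamma K H α) γ' = Coalgebra.counit ∧
        convH K γ' (cocycleGamma K H α) = Coalgebra.counit) :=
  cocycle_conv_invertible_iff_gamma_invertible_general K H α hcocycle hunit_left hunit_right
end

section
/- Let H be a finite-dimensional Hopf algebra over a field K of characteristic zero and α a Hopf 2-cocycle on H. Define a right action of H on ^αH by x · h = S̃(h₁) ·_α x ·_α h₂ for x ∈ ^αH and h ∈ H. Then for all x ∈ ^αH and h ∈ H one has Δ(x · h) = (x₁ · h₂) ⊗ S(h₁)x₂h₃; in other words, ^αH with this action and the coaction Δ is a Yetter–Drinfeld module over H. -/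
open TensorProduct LinearMap

universe u

/-- The right action of `H` on `^αH`: `x ⊗ h ↦ S̃(h₁) ·_α x ·_α h₂`. -/
noncomputable def ydAct (K H : Type u) [Field K] [Ring H] [HopfAlgebra K H]
    (α : H ⊗[K] H →ₗ[K] K) (γ' : H →ₗ[K] K) : H ⊗[K] H →ₗ[K] H :=
  aMul K H α ∘ₗ
    TensorProduct.map (aMul K H α) LinearMap.id ∘ₗ
      TensorProduct.map (TensorProduct.comm K H H).toLinearMap LinearMap.id ∘ₗ
        (TensorProduct.assoc K H H H).symm.toLinearMap ∘ₗ
          TensorProduct.map LinearMap.id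
            (TensorProduct.map (tAntipode K H γ') LinearMap.id ∘ₗ Coalgebra.comul)

/-- The rearrangement `(x₁ ⊗ x₂) ⊗ (h₁ ⊗ (h₂ ⊗ h₃)) ↦ (x₁ ⊗ h₂) ⊗ (h₁ ⊗ (x₂ ⊗ h₃))`. -/
noncomputable def ydPerm (K H : Type u) [Field K] [Ring H] [HopfAlgebra K H] :
    (H ⊗[K] H) ⊗[K] (H ⊗[K] (H ⊗[K] H)) →ₗ[K] (H ⊗[K] H) ⊗[K] (H ⊗[K] (H ⊗[K] H)) :=
  (TensorProduct.tensorTensorTensorComm K H H H (H ⊗[K] H)).toLinearMap ∘ₗ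
    TensorProduct.map LinearMap.id
      ((TensorProduct.assoc K H H H).toLinearMap ∘ₗ
        TensorProduct.map (TensorProduct.comm K H H).toLinearMap LinearMap.id ∘ₗ
          (TensorProduct.assoc K H H H).symm.toLinearMap) ∘ₗ
      (TensorProduct.tensorTensorTensorComm K H H H (H ⊗[K] H)).toLinearMap

/-!
Both sides are computed in Sweedler notation from two comodule-type identities:
`^αH` is an `H`-comodule algebra, `Δ(x ·_α y) = x₁ ·_α y₁ ⊗ x₂ y₂` (the cocycle `α` only ever
sees the first tensor legs), and the twisted antipode is an anti-coalgebra map twisted by `γ⁻¹`,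
`Δ(S̃ h) = S̃ h₂ ⊗ S h₁`, which follows from the corresponding property of `S` by uniqueness of
convolution inverses. Together they give
`Δ(S̃ a ·_α x ·_α b) = (S̃ a₂ ·_α x₁ ·_α b₁) ⊗ S(a₁) x₂ b₂`; taking `a ⊗ b = Δ h` and regrouping the
four tensor legs of `h` by coassociativity yields the Yetter–Drinfeld condition.
-/

open Coalgebra HopfAlgebra WithConv

section Coalgebra

variable {K C : Type*} [CommSemiring K] [AddCommMonoid C] [Module K C] [Coalgebra K C]

lemma comul_comp_lid_map_comp_comul (φ : C →ₗ[K] K) :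
    comul ∘ₗ (TensorProduct.lid K C).toLinearMap ∘ₗ map φ id ∘ₗ comul =
      map ((TensorProduct.lid K C).toLinearMap ∘ₗ map φ id ∘ₗ comul) id ∘ₗ comul := by
  have h_lid : comul ∘ₗ (TensorProduct.lid K C).toLinearMap ∘ₗ map φ id =
      (TensorProduct.lid K (C ⊗[K] C)).toLinearMap ∘ₗ map φ id ∘ₗ lTensor C comul := by
    ext; simp
  have h_assoc : (TensorProduct.lid K (C ⊗[K] C)).toLinearMap ∘ₗ map φ id ∘ₗ
      (TensorProduct.assoc K C C C).toLinearMap =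
        map ((TensorProduct.lid K C).toLinearMap ∘ₗ map φ id) id := by
    ext; simp [smul_tmul']
  calc comul ∘ₗ (TensorProduct.lid K C).toLinearMap ∘ₗ map φ id ∘ₗ comul
      = ((TensorProduct.lid K (C ⊗[K] C)).toLinearMap ∘ₗ map φ id) ∘ₗ
          lTensor C comul ∘ₗ comul := by
        rw [← comp_assoc, ← comp_assoc, comp_assoc _ _ comul, h_lid]; simp only [comp_assoc]
    _ = map ((TensorProduct.lid K C).toLinearMap ∘ₗ map φ id) id ∘ₗ rTensor C comul ∘ₗ comul := by
        rw [← coassoc, ← h_assoc]; simp only [comp_assoc]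
    _ = _ := by rw [rTensor, ← comp_assoc, ← map_comp, comp_id, comp_assoc]

lemma comul_comp_rid_map_comp_comul (φ : C →ₗ[K] K) :
    comul ∘ₗ (TensorProduct.rid K C).toLinearMap ∘ₗ map id φ ∘ₗ comul =
      map id ((TensorProduct.rid K C).toLinearMap ∘ₗ map id φ ∘ₗ comul) ∘ₗ comul := by
  have h_rid : comul ∘ₗ (TensorProduct.rid K C).toLinearMap ∘ₗ map id φ =
      (TensorProduct.rid K (C ⊗[K] C)).toLinearMap ∘ₗ map id φ ∘ₗ rTensor C comul := by
    ext; simp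
  have h_assoc : (TensorProduct.rid K (C ⊗[K] C)).toLinearMap ∘ₗ map id φ ∘ₗ
      (TensorProduct.assoc K C C C).symm.toLinearMap =
        map id ((TensorProduct.rid K C).toLinearMap ∘ₗ map id φ) := by
    ext; simp [tmul_smul]
  calc comul ∘ₗ (TensorProduct.rid K C).toLinearMap ∘ₗ map id φ ∘ₗ comul
      = ((TensorProduct.rid K (C ⊗[K] C)).toLinearMap ∘ₗ map id φ) ∘ₗ
          rTensor C comul ∘ₗ comul := by
        rw [← comp_assoc, ← comp_assoc, comp_assoc _ _ comul, h_rid]; simp only [comp_assoc]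
    _ = map id ((TensorProduct.rid K C).toLinearMap ∘ₗ map id φ) ∘ₗ lTensor C comul ∘ₗ comul := by
        rw [← coassoc_symm, ← h_assoc]; simp only [comp_assoc]
    _ = _ := by rw [lTensor, ← comp_assoc, ← map_comp, comp_id, comp_assoc]

lemma coassoc_fourfold :
    lTensor C (TensorProduct.assoc K C C C).symm.toLinearMap ∘ₗ
        (TensorProduct.assoc K C C (C ⊗[K] C)).toLinearMap ∘ₗ map comul comul ∘ₗ comul =
      lTensor C (rTensor C comul) ∘ₗ lTensor C comul ∘ₗ comul (R := K) (A := C) := by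
  simp only [coassoc_simps]

end Coalgebra

section Swap

variable {K A B C D E A' B' C' D' E' : Type*} [CommSemiring K]
  [AddCommMonoid A] [Module K A] [AddCommMonoid B] [Module K B] [AddCommMonoid C] [Module K C]
  [AddCommMonoid D] [Module K D] [AddCommMonoid E] [Module K E]
  [AddCommMonoid A'] [Module K A'] [AddCommMonoid B'] [Module K B'] [AddCommMonoid C'] [Module K C']
  [AddCommMonoid D'] [Module K D'] [AddCommMonoid E'] [Module K E']

variable (K A B C D E) in
/-- Generalizes `ydPerm K H`, which is `tensorSwap24 K H H H H H` by definition, so that it can be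
moved past a comultiplication on the fourth factor. -/
noncomputable def tensorSwap24 :
    (A ⊗[K] B) ⊗[K] (C ⊗[K] (D ⊗[K] E)) →ₗ[K] (A ⊗[K] D) ⊗[K] (C ⊗[K] (B ⊗[K] E)) :=
  (tensorTensorTensorComm K A C D (B ⊗[K] E)).toLinearMap ∘ₗ
    lTensor (A ⊗[K] C) ((TensorProduct.assoc K D B E).toLinearMap ∘ₗ
      rTensor E (TensorProduct.comm K B D).toLinearMap ∘ₗ
        (TensorProduct.assoc K B D E).symm.toLinearMap) ∘ₗ
    (tensorTensorTensorComm K A B C (D ⊗[K] E)).toLinearMap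

lemma tensorSwap24_comp_map (f : A →ₗ[K] A') (g : B →ₗ[K] B') (h : C →ₗ[K] C')
    (k : D →ₗ[K] D') (l : E →ₗ[K] E') :
    tensorSwap24 K A' B' C' D' E' ∘ₗ map (map f g) (map h (map k l)) =
      map (map f k) (map h (map g l)) ∘ₗ tensorSwap24 K A B C D E := by
  ext; simp [tensorSwap24]

end Swap

lemma tensorSwap24_comp_map_coassoc_fourfold {K M A B C : Type*} [CommSemiring K]
    [AddCommMonoid M] [Module K M] [AddCommMonoid A] [Module K A] [AddCommMonoid B] [Module K B]
    [AddCommMonoid C] [Module K C] [Coalgebra K C] (f : M →ₗ[K] A ⊗[K] B) :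
    tensorSwap24 K A B C (C ⊗[K] C) C ∘ₗ
        map f (lTensor C (TensorProduct.assoc K C C C).symm.toLinearMap ∘ₗ
          (TensorProduct.assoc K C C (C ⊗[K] C)).toLinearMap ∘ₗ map comul comul ∘ₗ comul) =
      rTensor _ (lTensor A comul) ∘ₗ tensorSwap24 K A B C C C ∘ₗ
        map f (lTensor C comul ∘ₗ comul) := by
  have h_swap := tensorSwap24_comp_map (id : A →ₗ[K] A) (id : B →ₗ[K] B) (id : C →ₗ[K] C)
    (comul (R := K) (A := C)) (id : C →ₗ[K] C)
  simp only [map_id] at h_swap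
  calc _ = (tensorSwap24 K A B C (C ⊗[K] C) C ∘ₗ map id (map id (map comul id))) ∘ₗ
        map f (lTensor C comul ∘ₗ comul) := by
        rw [coassoc_fourfold]; simp only [comp_assoc, lTensor, rTensor, ← map_comp, id_comp]
    _ = _ := by rw [h_swap, comp_assoc]; rfl

section Antipode

variable {K H : Type*} [CommSemiring K] [Semiring H] [HopfAlgebra K H]

lemma map_antipode_comm_comul_mul_comul :
    toConv (map (antipode K) (antipode K) ∘ₗ (TensorProduct.comm K H H).toLinearMap ∘ₗ comul) *
      toConv (comul (R := K) (A := H)) = 1 := by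
  set μS : H ⊗[K] H →ₗ[K] H := mul' K H ∘ₗ (antipode K).rTensor H
  have hμS : μS ∘ₗ comul = Algebra.linearMap K H ∘ₗ counit := by
    simp only [μS, comp_assoc]; exact mul_antipode_rTensor_comul
  have h_counit : map (Algebra.linearMap K H ∘ₗ counit) μS ∘ₗ
      (TensorProduct.leftComm K H H H).toLinearMap ∘ₗ (comul (R := K) (A := H)).lTensor H =
        Algebra.TensorProduct.includeRight.toLinearMap ∘ₗ μS := by
    refine TensorProduct.ext' fun a b => ?_
    simp only [μS, coe_comp, Function.comp_apply, lTensor_tmul]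
    rw [← (ℛ K b).eq, tmul_sum, map_sum, map_sum]
    simp only [LinearEquiv.coe_coe, leftComm_tmul, map_tmul, coe_comp, Function.comp_apply,
      AlgHom.toLinearMap_apply, Algebra.TensorProduct.includeRight_apply, Algebra.linearMap_apply,
      rTensor_tmul, mul'_apply, Algebra.algebraMap_eq_smul_one, smul_tmul, ← mul_smul_comm,
      ← tmul_sum, ← Finset.mul_sum, sum_counit_smul]
  -- the product is `S a₂ a₃ ⊗ S a₁ a₄`: the antipode axiom contracts the inner pair, then the outer
  apply WithConv.ext
  calc mul' K (H ⊗[K] H) ∘ₗ map (map (antipode K) (antipode K) ∘ₗ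
          (TensorProduct.comm K H H).toLinearMap ∘ₗ comul) comul ∘ₗ comul
      = (mul' K (H ⊗[K] H) ∘ₗ
          map (map (antipode K) (antipode K) ∘ₗ (TensorProduct.comm K H H).toLinearMap) id) ∘ₗ
          map comul comul ∘ₗ comul := by
        simp only [comp_assoc, CoassocSimps.TensorProduct.map_comp_assoc, id_comp]
    _ = (map μS μS ∘ₗ (tensorTensorTensorComm K H H H H).toLinearMap ∘ₗ
          map (TensorProduct.comm K H H).toLinearMap id) ∘ₗ map comul comul ∘ₗ comul := by
        congr 1; ext; simp [μS]
    _ = map (μS ∘ₗ comul) μS ∘ₗ (TensorProduct.leftComm K H H H).toLinearMap ∘ₗ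
          comul.lTensor H ∘ₗ comul := by
        simp only [coassoc_simps]
    _ = (Algebra.TensorProduct.includeRight.toLinearMap ∘ₗ μS) ∘ₗ comul := by
        rw [hμS, ← h_counit]; simp only [comp_assoc]
    _ = _ := by
        rw [comp_assoc, hμS]
        ext
        simp [Algebra.algebraMap_eq_smul_one, smul_tmul', Algebra.TensorProduct.one_def]

lemma comul_comp_antipode :
    comul ∘ₗ antipode K =
      map (antipode K) (antipode K) ∘ₗ (TensorProduct.comm K H H).toLinearMap ∘ₗ
        comul (R := K) (A := H) :=
  congr(ofConv $(left_inv_eq_right_inv map_antipode_comm_comul_mul_comul comul_right_inv)).symm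

end Antipode

section Deformation

variable {K H : Type u} [Field K] [Ring H] [HopfAlgebra K H]

lemma aMul_eq_lid (α : H ⊗[K] H →ₗ[K] K) :
    aMul K H α = (TensorProduct.lid K H).toLinearMap ∘ₗ map α (mul' K H) ∘ₗ comul := by
  rw [aMul, convH, ← comp_assoc, ← comp_assoc]
  congr 1
  ext
  simp [Algebra.smul_def]

lemma tAntipode_eq_rid (γ' : H →ₗ[K] K) :
    tAntipode K H γ' = (TensorProduct.rid K H).toLinearMap ∘ₗ map (antipode K) γ' ∘ₗ comul := by
  rw [tAntipode, convH, ← comp_assoc, ← comp_assoc]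
  congr 1
  ext
  simp [Algebra.algebraMap_eq_smul_one]

lemma comul_comp_aMul (α : H ⊗[K] H →ₗ[K] K) :
    comul ∘ₗ aMul K H α = map (aMul K H α) (mul' K H) ∘ₗ comul := by
  have h_mul (f : H ⊗[K] H →ₗ[K] H ⊗[K] H) :
      comul ∘ₗ mul' K H ∘ₗ f = map (mul' K H) (mul' K H) ∘ₗ comul ∘ₗ f := by
    rw [← comp_assoc, ← Bialgebra.toLinearMap_mulCoalgHom, ← CoalgHomClass.map_comp_comul]; rfl
  rw [aMul_eq_lid]
  simp only [coassoc_simps, h_mul, comul_comp_lid_map_comp_comul]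

lemma comul_comp_tAntipode (γ' : H →ₗ[K] K) :
    comul ∘ₗ tAntipode K H γ' =
      map (tAntipode K H γ') (antipode K) ∘ₗ (TensorProduct.comm K H H).toLinearMap ∘ₗ comul := by
  have h_antipode (f : H →ₗ[K] H) :
      comul ∘ₗ antipode K ∘ₗ f = map (antipode K) (antipode K) ∘ₗ
        (TensorProduct.comm K H H).toLinearMap ∘ₗ comul ∘ₗ f := by
    rw [← comp_assoc, comul_comp_antipode]; simp only [comp_assoc]
  rw [tAntipode_eq_rid]
  simp only [coassoc_simps, h_antipode, comul_comp_rid_map_comp_comul]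

variable (K H) in
/-- `x ⊗ (a ⊗ b) ↦ S̃(a) ·_α x ·_α b`. -/
noncomputable def sandwichMul (α : H ⊗[K] H →ₗ[K] K) (γ' : H →ₗ[K] K) :
    H ⊗[K] (H ⊗[K] H) →ₗ[K] H :=
  aMul K H α ∘ₗ map (aMul K H α) id ∘ₗ map (TensorProduct.comm K H H).toLinearMap id ∘ₗ
    (TensorProduct.assoc K H H H).symm.toLinearMap ∘ₗ map id (map (tAntipode K H γ') id)

lemma ydAct_eq_sandwichMul_comp (α : H ⊗[K] H →ₗ[K] K) (γ' : H →ₗ[K] K) :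
    ydAct K H α γ' = sandwichMul K H α γ' ∘ₗ lTensor H comul := by
  rw [ydAct, sandwichMul, lTensor, comp_assoc, comp_assoc, comp_assoc, comp_assoc, ← map_comp,
    comp_id]

lemma comul_comp_sandwichMul (α : H ⊗[K] H →ₗ[K] K) (γ' : H →ₗ[K] K) :
    comul ∘ₗ sandwichMul K H α γ' =
      map (sandwichMul K H α γ') (mul' K H ∘ₗ map (antipode K) (mul' K H)) ∘ₗ
        tensorSwap24 K H H H (H ⊗[K] H) H ∘ₗ
          map comul (lTensor H (TensorProduct.assoc K H H H).symm.toLinearMap ∘ₗ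
            (TensorProduct.assoc K H H (H ⊗[K] H)).toLinearMap ∘ₗ map comul comul) := by
  refine TensorProduct.ext_threefold' fun x a b => ?_
  have h_aMul := LinearMap.congr_fun (comul_comp_aMul α)
  have h_tAntipode := LinearMap.congr_fun (comul_comp_tAntipode γ')
  simp only [coe_comp, Function.comp_apply] at h_aMul h_tAntipode
  simp only [sandwichMul, coe_comp, Function.comp_apply, map_tmul, id_coe, id_eq,
    LinearEquiv.coe_coe, assoc_symm_tmul, comm_tmul, h_aMul, comul_tmul, h_tAntipode]
  -- both sides are now linear in `Δa`, `Δx` and `Δb`, so it suffices to check pure tensors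
  generalize comul (R := K) a = p, comul (R := K) x = q, comul (R := K) b = r
  induction p using TensorProduct.induction_on with
  | zero => simp
  | add p p' hp hp' => simp only [map_add, add_tmul, tmul_add, hp, hp']
  | tmul a₁ a₂ =>
    induction q using TensorProduct.induction_on with
    | zero => simp
    | add q q' hq hq' => simp only [map_add, add_tmul, tmul_add, hq, hq']
    | tmul x₁ x₂ =>
      induction r using TensorProduct.induction_on with
      | zero => simp
      | add r r' hr hr' => simp only [map_add, tmul_add, hr, hr']
      | tmul b₁ b₂ => simp [tensorSwap24, mul_assoc]

end Deformation

theorem cocycle_deformation_yetter_drinfeld_general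
    (K H : Type u) [Field K] [Ring H] [HopfAlgebra K H]
    (α : H ⊗[K] H →ₗ[K] K)
    (γ' : H →ₗ[K] K) :
    Coalgebra.comul ∘ₗ ydAct K H α γ' =
      TensorProduct.map (ydAct K H α γ')
          (LinearMap.mul' K H ∘ₗ
            TensorProduct.map (HopfAlgebra.antipode (R := K)) (LinearMap.mul' K H)) ∘ₗ
        ydPerm K H ∘ₗ
          TensorProduct.map Coalgebra.comul
            (TensorProduct.map LinearMap.id Coalgebra.comul ∘ₗ Coalgebra.comul) := by
  calc comul ∘ₗ ydAct K H α γ'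
      = map (sandwichMul K H α γ') (mul' K H ∘ₗ map (antipode K) (mul' K H)) ∘ₗ
          tensorSwap24 K H H H (H ⊗[K] H) H ∘ₗ
            map comul (lTensor H (TensorProduct.assoc K H H H).symm.toLinearMap ∘ₗ
              (TensorProduct.assoc K H H (H ⊗[K] H)).toLinearMap ∘ₗ map comul comul ∘ₗ comul) := by
        rw [ydAct_eq_sandwichMul_comp, ← comp_assoc, comul_comp_sandwichMul]
        simp only [comp_assoc, lTensor, ← map_comp, comp_id]
    _ = _ := by
        rw [tensorSwap24_comp_map_coassoc_fourfold, ydAct_eq_sandwichMul_comp]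
        simp only [← comp_assoc, rTensor, ← map_comp, comp_id]
        rfl

/-- `Δ(x · h) = (x₁ · h₂) ⊗ S(h₁)x₂h₃`, i.e. `^αH` with the action
`x · h = S̃(h₁) ·_α x ·_α h₂` and coaction `Δ` is a Yetter–Drinfeld module over `H`. -/
theorem cocycle_deformation_yetter_drinfeld
    (K H : Type u) [Field K] [CharZero K] [Ring H] [HopfAlgebra K H]
    [FiniteDimensional K H]
    (α : H ⊗[K] H →ₗ[K] K) (hα : IsHopfCocycle K H α)
    (γ' : H →ₗ[K] K)
    (hγ' : convH K (cocycleGamma K H α) γ' = Coalgebra.counit ∧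
           convH K γ' (cocycleGamma K H α) = Coalgebra.counit) :
    Coalgebra.comul ∘ₗ ydAct K H α γ' =
      TensorProduct.map (ydAct K H α γ')
          (LinearMap.mul' K H ∘ₗ
            TensorProduct.map (HopfAlgebra.antipode (R := K)) (LinearMap.mul' K H)) ∘ₗ
        ydPerm K H ∘ₗ
          TensorProduct.map Coalgebra.comul
            (TensorProduct.map LinearMap.id Coalgebra.comul ∘ₗ Coalgebra.comul) :=
  cocycle_deformation_yetter_drinfeld_general K H α γ'
end

section
/- Let F be a finite group, K a field of characteristic zero, and α : F × F → K^× a normalized 2-cocycle (i.e. α(g,h)α(gh,k) = α(h,k)α(g,hk) and α(1,g) = α(g,1) = 1). Let K^αF be the twisted group algebra, with K-basis {U_f : f ∈ F} and multiplication U_gU_h = α(g,h)U_{gh} (so each U_f is invertible). If the center of K^αF equals K·1, then for every f ∈ F with f ≠ 1 one has Σ_{f' ∈ F} U_{f'} U_f U_{f'}^{-1} = 0 in K^αF. -/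
universe u v

/-- Let `K^αF` be a twisted group algebra of a finite group `F` over a
field `K` of characteristic zero, realized inside a `K`-algebra `A` with basis of units
`U f` satisfying `U g * U h = α(g,h) • U(gh)`.  If the center of `A` is `K·1`, then for
every `f ≠ 1` one has `Σ_{f'} U_{f'} U_f U_{f'}⁻¹ = 0`. -/
theorem twisted_group_algebra_sum_conjugates_eq_zero
    (F : Type u) [Group F] [Fintype F]
    (K : Type v) [Field K] [CharZero K]
    (A : Type v) [Ring A] [Algebra K A]
    (α : F → F → Kˣ)
    (hcocycle : ∀ g h k : F, (α g h : K) * α (g * h) k = (α h k : K) * α g (h * k))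
    (hnorm_left : ∀ g : F, α 1 g = 1) (hnorm_right : ∀ g : F, α g 1 = 1)
    (U : F → Aˣ) (hU1 : U 1 = 1)
    (hUmul : ∀ g h : F, (U g : A) * (U h : A) = (α g h : K) • (U (g * h) : A))
    (hbasis_indep : LinearIndependent K (fun f : F => (U f : A)))
    (hbasis_span : Submodule.span K (Set.range fun f : F => (U f : A)) = ⊤)
    (hcenter : Subalgebra.center K A = ⊥) :
    ∀ f : F, f ≠ 1 → (∑ f' : F, (U f' : A) * (U f : A) * ((U f')⁻¹ : Aˣ)) = 0 := by
  intro f hf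
  -- scalar units in A
  set c : F → F → Aˣ := fun g h => Units.map (algebraMap K A).toMonoidHom (α g h) with hc
  have hcComm : ∀ g h : F, ∀ w : Aˣ, Commute (c g h) w := by
    intro g h w
    apply Units.ext
    simp [hc, Algebra.commutes]
  have hUmul' : ∀ g h : F, U g * U h = c g h * U (g * h) := by
    intro g h
    ext
    simp [hc, hUmul, Algebra.smul_def]
  set V : F → Aˣ := fun f' => U f' * U f * (U f')⁻¹ with hV
  have hVconj : ∀ g f' : F, U g * V f' * (U g)⁻¹ = V (g * f') := by
    intro g f'
    have h1 : U (g * f') = (c g f')⁻¹ * (U g * U f') := by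
      rw [hUmul' g f', inv_mul_cancel_left]
    have h2 : Commute ((c g f')⁻¹) (U g * U f' * U f * (U g * U f')⁻¹) :=
      ((hcComm g f' _).inv_left)
    have cancel : ∀ (d x : Aˣ), Commute d x → d * x * d⁻¹ = x := by
      intro d x h
      rw [h.eq, mul_inv_cancel_right]
    calc U g * V f' * (U g)⁻¹
        = (U g * U f') * U f * (U g * U f')⁻¹ := by simp only [hV]; group
      _ = (c g f')⁻¹ * ((U g * U f') * U f * (U g * U f')⁻¹) * ((c g f')⁻¹)⁻¹ :=
          (cancel _ _ h2).symm
      _ = V (g * f') := by simp only [hV, h1]; group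
  set T : A := ∑ f' : F, (U f' : A) * (U f : A) * ((U f')⁻¹ : Aˣ) with hT
  have hTV : T = ∑ f' : F, ((V f' : A)) := by
    simp [hT, hV]
  have hTcommU : ∀ g : F, (U g : A) * T = T * (U g : A) := by
    intro g
    have key : (U g : A) * T * ((U g)⁻¹ : Aˣ) = T := by
      rw [hTV, Finset.mul_sum, Finset.sum_mul]
      rw [show (∑ f' : F, (V f' : A)) = ∑ f' : F, (V (g * f') : A) from
        (Fintype.sum_equiv (Equiv.mulLeft g) _ _ (fun _ => rfl)).symm]
      refine Finset.sum_congr rfl fun f' _ => ?_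
      rw [← hVconj g f']
      push_cast
      ring
    calc (U g : A) * T = (U g : A) * T * ((U g)⁻¹ : Aˣ) * (U g : A) := by
          rw [mul_assoc, Units.inv_mul, mul_one]
      _ = T * (U g : A) := by rw [key]
  have hTcentral : T ∈ Subalgebra.center K A := by
    rw [Subalgebra.mem_center_iff]
    intro b
    have hb : b ∈ Submodule.span K (Set.range fun f : F => (U f : A)) := by
      rw [hbasis_span]; trivial
    induction hb using Submodule.span_induction with
    | mem x hx => obtain ⟨g, rfl⟩ := hx; exact hTcommU g
    | zero => simp
    | add x y _ _ hx hy => rw [add_mul, mul_add, hx, hy]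
    | smul k x _ hx => rw [smul_mul_assoc, mul_smul_comm, hx]
  have hTbot : T ∈ (⊥ : Subalgebra K A) := hcenter ▸ hTcentral
  rw [Algebra.mem_bot] at hTbot
  obtain ⟨k, hk⟩ := hTbot
  -- T lies in the span of U g for g ≠ 1
  set S : Submodule K A := Submodule.span K ((fun g : F => (U g : A)) '' {g | g ≠ 1}) with hS
  have hUinv : ∀ g : F, (U g)⁻¹ = U g⁻¹ * (c g g⁻¹)⁻¹ := by
    intro g
    refine inv_eq_of_mul_eq_one_right ?_
    rw [← mul_assoc, hUmul']
    simp [hU1]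
  have hcval : ∀ g h : F, ((c g h : Aˣ) : A) = algebraMap K A (α g h : K) := by
    intro g h; simp [hc]
  have hcinvval : ∀ g h : F, (((c g h)⁻¹ : Aˣ) : A) = algebraMap K A ((α g h : K)⁻¹) := by
    intro g h
    rw [hc]
    rw [← map_inv (Units.map (algebraMap K A).toMonoidHom) (α g h)]
    simp
  have hTmemS : T ∈ S := by
    rw [hTV]
    refine Submodule.sum_mem _ fun f' _ => ?_
    have hVunits : V f' = c f' f * (c (f' * f) f'⁻¹ * U (f' * f * f'⁻¹)) * (c f' f'⁻¹)⁻¹ := by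
      rw [hV]
      simp only
      rw [hUinv f', hUmul' f' f, mul_assoc (c f' f), ← mul_assoc (U (f' * f)),
        hUmul' (f' * f) f'⁻¹, ← mul_assoc, ← mul_assoc]
    have hVval : (V f' : A) =
        ((α f' f : K) * (α (f' * f) f'⁻¹ : K) * ((α f' f'⁻¹ : K)⁻¹)) •
          (U (f' * f * f'⁻¹) : A) := by
      rw [hVunits]
      push_cast
      rw [hcval, hcval, hcinvval, Algebra.smul_def, map_mul, map_mul]
      simp only [mul_assoc]
      rw [← Algebra.commutes ((α f' f'⁻¹ : K)⁻¹)]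
    rw [hVval]
    refine Submodule.smul_mem _ _ (Submodule.subset_span ?_)
    refine ⟨f' * f * f'⁻¹, ?_, rfl⟩
    simp only [Set.mem_setOf_eq]
    intro h
    apply hf
    have := congrArg (fun x => f'⁻¹ * x * f') h
    simpa [mul_assoc] using this
  have hU1S : (U 1 : A) ∉ S := by
    exact hbasis_indep.notMem_span_image (s := {g : F | g ≠ 1}) (x := (1 : F)) (by simp)
  by_cases hk0 : k = 0
  · rw [← hk, hk0, map_zero]
  · exfalso
    apply hU1S
    have hU1T : (U 1 : A) = k⁻¹ • T := by
      rw [← hk, Algebra.algebraMap_eq_smul_one, ← smul_assoc, smul_eq_mul,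
        inv_mul_cancel₀ hk0, one_smul, hU1, Units.val_one]
    rw [hU1T]
    exact Submodule.smul_mem _ _ hTmemS
end

section
/- Let K be an algebraically closed field of characteristic zero and let λ, μ ∈ K. Then the quotient of the free associative K-algebra K⟨a,b,c⟩ by the two-sided ideal generated by the elements a² − λ, b² − λ, c² − λ, ab + bc + ca − μ, and ac + cb + ba − μ is a nonzero algebra. -/
universe u

noncomputable section

open FreeAlgebra

/-- The defining relations of the deformed Fomin–Kirillov algebra:
`a² = λ, b² = λ, c² = λ, ab + bc + ca = μ, ac + cb + ba = μ`. -/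
def FKRel (K : Type u) [Field K] (lam mu : K) :
    FreeAlgebra K (Fin 3) → FreeAlgebra K (Fin 3) → Prop := fun x y =>
  y = 0 ∧
    (x = ι K (0 : Fin 3) * ι K 0 - algebraMap K _ lam ∨
     x = ι K (1 : Fin 3) * ι K 1 - algebraMap K _ lam ∨
     x = ι K (2 : Fin 3) * ι K 2 - algebraMap K _ lam ∨
     x = ι K (0 : Fin 3) * ι K 1 + ι K 1 * ι K 2 + ι K 2 * ι K 0 - algebraMap K _ mu ∨
     x = ι K (0 : Fin 3) * ι K 2 + ι K 2 * ι K 1 + ι K 1 * ι K 0 - algebraMap K _ mu)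

/-- For any `λ, μ` in an algebraically closed field of characteristic
zero, the quotient of `K⟨a,b,c⟩` by the ideal generated by
`a² − λ, b² − λ, c² − λ, ab + bc + ca − μ, ac + cb + ba − μ` is nonzero. -/
theorem deformed_FK3_nontrivial
    (K : Type u) [Field K] [IsAlgClosed K] [CharZero K] (lam mu : K) :
    Nontrivial (RingQuot (FKRel K lam mu)) := by
  obtain ⟨p, q, hpq, hsum⟩ : ∃ p q : K, p * q = lam ∧ p * lam + q = mu - lam := by
    by_cases hl : lam = 0
    · exact ⟨0, mu, by simp [hl], by simp [hl]⟩
    · obtain ⟨p, hp⟩ := IsAlgClosed.exists_root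
        (Polynomial.C lam * Polynomial.X ^ 2 - Polynomial.C (mu - lam) * Polynomial.X
          + Polynomial.C lam) (by
            have : (Polynomial.C lam * Polynomial.X ^ 2 - Polynomial.C (mu - lam) * Polynomial.X
              + Polynomial.C lam).degree = 2 := by
              compute_degree!
            rw [this]; decide)
      have hp' : lam * p ^ 2 - (mu - lam) * p + lam = 0 := by
        simpa [Polynomial.IsRoot] using hp
      have hp0 : p ≠ 0 := by
        rintro rfl; simp at hp'; exact hl hp'
      refine ⟨p, lam / p, by field_simp, ?_⟩
      field_simp
      linear_combination hp'
  set f : Fin 3 → Matrix (Fin 2) (Fin 2) K :=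
    ![!![0, p; q, 0], !![0, 1; lam, 0], !![0, 1; lam, 0]] with hf
  set g : FreeAlgebra K (Fin 3) →ₐ[K] Matrix (Fin 2) (Fin 2) K := FreeAlgebra.lift K f with hg
  have hrel : ∀ x y, FKRel K lam mu x y → g x = g y := by
    rintro x y ⟨rfl, rfl | rfl | rfl | rfl | rfl⟩ <;>
      · simp only [map_sub, map_add, map_mul, AlgHom.commutes, FreeAlgebra.lift_ι_apply, hg, hf,
          Matrix.cons_val_zero, Matrix.cons_val_one, Matrix.head_cons, map_zero,
          Matrix.cons_val_two, Matrix.tail_cons]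
        ext i j
        fin_cases i <;> fin_cases j <;>
          simp [Matrix.mul_apply, Fin.sum_univ_two, Matrix.algebraMap_matrix_apply] <;>
          first | linear_combination hpq | linear_combination hsum
  let G : RingQuot (FKRel K lam mu) →ₐ[K] Matrix (Fin 2) (Fin 2) K :=
    RingQuot.liftAlgHom K ⟨g, hrel⟩
  refine ⟨1, 0, fun h => ?_⟩
  have := congrArg G h
  simp only [map_one, map_zero] at this
  exact one_ne_zero this

end
end
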